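/- Let G be a group, A an abelian group, and 1 \to A \to G \to Q \to 1 a central extension (more generally, let Q = G/Z where Z \le Z(G)). Then the quotient map p : G \to Q induces an isomorphism p^* : H_b^2(Q) \to H_b^2(G) on second bounded cohomology, injectivity holding because a bounded 2-cocycle pulled back from Q that is a bounded coboundary on G is already a bounded coboundary on Q (using homogeneity and amenability of the kernel via an invariant mean). -/

import Mathlib

/-!
Injectivity: if `p^* c' = δb` with `b` bounded and homogeneous, then comparing `δb` at
`(1, a, a z)` and `(1, a, a)` shows that `z ↦ b(1, z) - b(1, 1)` is a bounded homomorphism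
`Z → ℝ`, hence zero; so `b` is `Z`-invariant in each variable and descends to `Q`.

Surjectivity: the centre of `G` is abelian, so it carries an invariant mean `m` (a limit along an
ultrafilter of averages over boxes `s₁^[0,n) ⋯ s_k^[0,n)`). Averaging the cocycle identity at
`(g₀, g₁, g₂, g₂ z)` over `z` shows that `c - δw`, with `w(x, y) = m_z c(x, y, y z)`, is invariant
under the centre in its last variable. Reversing the order of the vertices and averaging again
gives invariance in the first variable as well, and homogeneity then gives it in the middle one,
so the resulting cocycle is pulled back from `Q`.
-/
section

variable {G : Type*} [Group G]

/-- Homogeneous 2-cochains. -/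
def IsHomog2 (c : G → G → G → ℝ) : Prop :=
  ∀ h g₀ g₁ g₂ : G, c (g₀ * h) (g₁ * h) (g₂ * h) = c g₀ g₁ g₂

/-- Homogeneous 1-cochains. -/
def IsHomog1 (b : G → G → ℝ) : Prop :=
  ∀ h g₀ g₁ : G, b (g₀ * h) (g₁ * h) = b g₀ g₁

/-- Bounded 2-cochains. -/
def Bdd2 (c : G → G → G → ℝ) : Prop := ∃ C : ℝ, ∀ g₀ g₁ g₂, |c g₀ g₁ g₂| ≤ C

/-- Bounded 1-cochains. -/
def Bdd1 (b : G → G → ℝ) : Prop := ∃ C : ℝ, ∀ g₀ g₁, |b g₀ g₁| ≤ C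

/-- Coboundary of a homogeneous 1-cochain. -/
def d1 (b : G → G → ℝ) : G → G → G → ℝ := fun g₀ g₁ g₂ => b g₁ g₂ - b g₀ g₂ + b g₀ g₁

/-- Coboundary of a homogeneous 2-cochain. -/
def d2 (c : G → G → G → ℝ) : G → G → G → G → ℝ :=
  fun g₀ g₁ g₂ g₃ => c g₁ g₂ g₃ - c g₀ g₂ g₃ + c g₀ g₁ g₃ - c g₀ g₁ g₂

end

open Finset Filter Topology

namespace InvariantMean

variable {H : Type*} [CommGroup H]

noncomputable def cesaro (w : H) (n : ℕ) : Module.End ℝ (H → ℝ) :=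
  (n : ℝ)⁻¹ • ∑ k ∈ range n, LinearMap.funLeft ℝ ℝ (w ^ k * ·)

theorem cesaro_apply (w : H) (n : ℕ) (f : H → ℝ) (z : H) :
    cesaro w n f z = (n : ℝ)⁻¹ * ∑ k ∈ range n, f (w ^ k * z) := by
  simp [cesaro, LinearMap.funLeft_apply]

theorem cesaro_commute (v w : H) (n : ℕ) : Commute (cesaro v n) (cesaro w n) := by
  refine LinearMap.ext fun f => funext fun z => ?_
  simp only [Module.End.mul_apply, cesaro_apply, mul_sum]
  rw [sum_comm]
  refine sum_congr rfl fun j _ => sum_congr rfl fun k _ => ?_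
  rw [mul_left_comm (v ^ k), mul_left_comm (w ^ j)]

noncomputable def translate (v : H) : Module.End ℝ (H → ℝ) := LinearMap.funLeft ℝ ℝ (v * ·)

theorem translate_apply (v : H) (f : H → ℝ) (z : H) : translate v f z = f (v * z) := rfl

theorem translate_commute_cesaro (v w : H) (n : ℕ) : Commute (translate v) (cesaro w n) := by
  refine LinearMap.ext fun f => funext fun z => ?_
  simp only [Module.End.mul_apply, cesaro_apply, translate_apply, mul_left_comm v]

theorem abs_cesaro_apply_le {f : H → ℝ} {C : ℝ} (hf : ∀ z, |f z| ≤ C) (w : H) (n : ℕ) (z : H) :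
    |cesaro w n f z| ≤ C := by
  have hC : 0 ≤ C := (abs_nonneg _).trans (hf 1)
  rw [cesaro_apply, abs_mul, abs_inv, Nat.abs_cast]
  rcases n.eq_zero_or_pos with rfl | hn
  · simpa using hC
  rw [inv_mul_le_iff₀ (by positivity)]
  calc |∑ k ∈ range n, f (w ^ k * z)| ≤ ∑ k ∈ range n, |f (w ^ k * z)| := abs_sum_le_sum_abs _ _
    _ ≤ ∑ _k ∈ range n, C := sum_le_sum fun k _ => hf _
    _ = n * C := by simp

theorem cesaro_const {n : ℕ} (hn : n ≠ 0) (w : H) (r : ℝ) :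
    cesaro w n (fun _ => r) = fun _ => r := by
  funext z
  rw [cesaro_apply, sum_const, card_range, nsmul_eq_mul, inv_mul_cancel_left₀ (by positivity)]

theorem cesaro_translate_sub (w : H) (n : ℕ) (f : H → ℝ) (z : H) :
    cesaro w n (translate w f) z - cesaro w n f z = (f (w ^ n * z) - f z) / n := by
  simp only [cesaro_apply, translate_apply, ← mul_assoc, ← pow_succ', ← mul_sub, ← sum_sub_distrib,
    sum_range_sub (fun k => f (w ^ k * z)), pow_zero, one_mul]
  ring

noncomputable def boxAvg (S : Finset H) (n : ℕ) : Module.End ℝ (H → ℝ) :=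
  S.noncommProd (cesaro · n) fun v _ w _ _ => cesaro_commute v w n

theorem abs_boxAvg_apply_le {f : H → ℝ} {C : ℝ} (hf : ∀ z, |f z| ≤ C) (S : Finset H) (n : ℕ)
    (z : H) : |boxAvg S n f z| ≤ C := by
  revert f C z
  refine noncommProd_induction _ _ _
    (fun T : Module.End ℝ (H → ℝ) => ∀ {f : H → ℝ} {C : ℝ}, (∀ z, |f z| ≤ C) → ∀ z, |T f z| ≤ C)
    (fun T T' hT hT' f C hf => hT (hT' hf)) (fun hf => hf)
    fun w _ f C hf => abs_cesaro_apply_le hf w n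

theorem boxAvg_const {n : ℕ} (hn : n ≠ 0) (S : Finset H) (r : ℝ) :
    boxAvg S n (fun _ => r) = fun _ => r := by
  revert r
  refine noncommProd_induction _ _ _
    (fun T : Module.End ℝ (H → ℝ) => ∀ r : ℝ, T (fun _ => r) = fun _ => r)
    (fun T T' hT hT' r => by rw [Module.End.mul_apply, hT', hT]) (fun _ => rfl)
    fun w _ r => cesaro_const hn w r

theorem abs_boxAvg_translate_sub_le {f : H → ℝ} {C : ℝ} (hf : ∀ z, |f z| ≤ C) {S : Finset H}
    {v : H} (hv : v ∈ S) (n : ℕ) :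
    |boxAvg S n (translate v f) 1 - boxAvg S n f 1| ≤ 2 * C / n := by
  classical
  set F := boxAvg (S.erase v) n f
  have hsplit : boxAvg S n = cesaro v n * boxAvg (S.erase v) n :=
    (mul_noncommProd_erase S hv _ _).symm
  have hcomm : Commute (translate v) (boxAvg (S.erase v) n) :=
    noncommProd_commute _ _ _ _ fun w _ => translate_commute_cesaro v w n
  have hF : ∀ z, |F z| ≤ C := abs_boxAvg_apply_le hf _ n
  rw [hsplit, Module.End.mul_apply, Module.End.mul_apply, ← Module.End.mul_apply _ (translate v),
    ← hcomm.eq, Module.End.mul_apply, cesaro_translate_sub, abs_div, Nat.abs_cast]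
  gcongr
  calc |F (v ^ n * 1) - F 1| ≤ |F (v ^ n * 1)| + |F 1| := abs_sub _ _
    _ ≤ 2 * C := by linarith [hF (v ^ n * 1), hF 1]

variable (H) in
open Classical in
noncomputable def boxUltrafilter : Ultrafilter (Finset H × ℕ) := Ultrafilter.of atTop

open Classical in
theorem eventually_mem_boxUltrafilter (v : H) : ∀ᶠ p : Finset H × ℕ in boxUltrafilter H, v ∈ p.1 :=
  Ultrafilter.of_le _ <| eventually_atTop.2 ⟨({v}, 0), fun _ hp => hp.1 (mem_singleton_self v)⟩

open Classical in
theorem eventually_le_boxUltrafilter (N : ℕ) : ∀ᶠ p : Finset H × ℕ in boxUltrafilter H, N ≤ p.2 :=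
  Ultrafilter.of_le _ <| eventually_atTop.2 ⟨(∅, N), fun _ hp => hp.2⟩

-- Meaningful only for bounded `f`: otherwise the limit may not exist and `limUnder` is junk.
noncomputable def mean (f : H → ℝ) : ℝ :=
  limUnder (boxUltrafilter H : Filter (Finset H × ℕ)) fun p => boxAvg p.1 p.2 f 1

theorem tendsto_mean {f : H → ℝ} {C : ℝ} (hf : ∀ z, |f z| ≤ C) :
    Tendsto (fun p : Finset H × ℕ => boxAvg p.1 p.2 f 1) (boxUltrafilter H) (𝓝 (mean f)) := by
  have hmem : ∀ p : Finset H × ℕ, boxAvg p.1 p.2 f 1 ∈ Set.Icc (-C) C :=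
    fun p => abs_le.1 (abs_boxAvg_apply_le hf p.1 p.2 1)
  obtain ⟨x, -, hx⟩ := isCompact_Icc.ultrafilter_le_nhds ((boxUltrafilter H).map _)
    (le_principal_iff.2 (mem_map.2 (univ_mem' hmem)))
  exact tendsto_nhds_limUnder ⟨x, hx⟩

theorem abs_mean_le {f : H → ℝ} {C : ℝ} (hf : ∀ z, |f z| ≤ C) : |mean f| ≤ C :=
  abs_le.2 <| isClosed_Icc.mem_of_tendsto (tendsto_mean hf) <|
    Eventually.of_forall fun p => abs_le.1 (abs_boxAvg_apply_le hf p.1 p.2 1)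

theorem mean_add {f g : H → ℝ} {C D : ℝ} (hf : ∀ z, |f z| ≤ C) (hg : ∀ z, |g z| ≤ D) :
    mean (fun z => f z + g z) = mean f + mean g := by
  change mean (f + g) = _
  simpa only [mean, map_add, Pi.add_apply] using
    ((tendsto_mean hf).add (tendsto_mean hg)).limUnder_eq

theorem mean_sub {f g : H → ℝ} {C D : ℝ} (hf : ∀ z, |f z| ≤ C) (hg : ∀ z, |g z| ≤ D) :
    mean (fun z => f z - g z) = mean f - mean g := by
  change mean (f - g) = _
  simpa only [mean, map_sub, Pi.sub_apply] using
    ((tendsto_mean hf).sub (tendsto_mean hg)).limUnder_eq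

theorem mean_const (r : ℝ) : mean (fun _ : H => r) = r := by
  have hbox : ∀ᶠ p : Finset H × ℕ in boxUltrafilter H, boxAvg p.1 p.2 (fun _ => r) 1 = r :=
    (eventually_le_boxUltrafilter 1).mono fun p hp => by
      rw [boxAvg_const (Nat.one_le_iff_ne_zero.1 hp)]
  exact (tendsto_const_nhds.congr' (EventuallyEq.symm hbox)).limUnder_eq

theorem mean_comp_mul {f : H → ℝ} {C : ℝ} (hf : ∀ z, |f z| ≤ C) (v : H) :
    mean (fun z => f (v * z)) = mean f := by
  have hn : Tendsto (fun p : Finset H × ℕ => 2 * C / p.2) (boxUltrafilter H) (𝓝 0) :=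
    (tendsto_const_div_atTop_nhds_zero_nat (2 * C)).comp <|
      tendsto_atTop.2 eventually_le_boxUltrafilter
  have hdiff : Tendsto (fun p : Finset H × ℕ =>
      boxAvg p.1 p.2 (translate v f) 1 - boxAvg p.1 p.2 f 1) (boxUltrafilter H) (𝓝 0) :=
    squeeze_zero_norm' ((eventually_mem_boxUltrafilter v).mono fun p hp =>
      abs_boxAvg_translate_sub_le hf hp p.2) hn
  have h := ((tendsto_mean hf).add hdiff).limUnder_eq
  simp only [add_sub_cancel, add_zero] at h
  exact h

end InvariantMean

theorem eq_zero_of_map_mul_of_abs_le {M : Type*} [Monoid M] {f : M → ℝ}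
    (hf : ∀ a b, f (a * b) = f a + f b) {C : ℝ} (hC : ∀ a, |f a| ≤ C) (a : M) : f a = 0 := by
  have hpow : ∀ n : ℕ, f (a ^ n) = n * f a := by
    intro n
    induction n with
    | zero => simpa using hf 1 1
    | succ n ih => rw [pow_succ, hf, ih]; push_cast; ring
  by_contra ha
  obtain ⟨n, hn⟩ := exists_nat_gt (C / |f a|)
  have := hC (a ^ n)
  rw [hpow, abs_mul, Nat.abs_cast, ← le_div_iff₀ (abs_pos.2 ha)] at this
  linarith

open Subgroup

section Cochains

variable {G : Type*} [Group G]

structure IsBoundedCocycle (c : G → G → G → ℝ) : Prop where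
  homog : IsHomog2 c
  bdd : Bdd2 c
  cocycle : ∀ g₀ g₁ g₂ g₃, d2 c g₀ g₁ g₂ g₃ = 0

theorem IsBoundedCocycle.sub_d1 {c : G → G → G → ℝ} {b : G → G → ℝ} (hc : IsBoundedCocycle c)
    (hb : IsHomog1 b) (hb' : Bdd1 b) : IsBoundedCocycle (c - d1 b) where
  homog h g₀ g₁ g₂ := by simp only [Pi.sub_apply, d1, hc.homog h, hb h]
  bdd := by
    obtain ⟨C, hC⟩ := hc.bdd
    obtain ⟨D, hD⟩ := hb'
    refine ⟨C + 3 * D, fun g₀ g₁ g₂ => ?_⟩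
    simp only [Pi.sub_apply, d1]
    have := hC g₀ g₁ g₂
    have := hD g₁ g₂
    have := hD g₀ g₂
    have := hD g₀ g₁
    calc _ ≤ |c g₀ g₁ g₂| + |b g₁ g₂| + |b g₀ g₂| + |b g₀ g₁| := by
          grind [abs_sub, abs_add_le]
      _ ≤ C + 3 * D := by linarith
  cocycle g₀ g₁ g₂ g₃ := by
    have := hc.cocycle g₀ g₁ g₂ g₃
    simp only [d2, d1, Pi.sub_apply] at this ⊢
    linarith

def reverse2 (c : G → G → G → ℝ) : G → G → G → ℝ := fun g₀ g₁ g₂ => c g₂ g₁ g₀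

theorem IsBoundedCocycle.reverse2 {c : G → G → G → ℝ} (hc : IsBoundedCocycle c) :
    IsBoundedCocycle (reverse2 c) where
  homog h g₀ g₁ g₂ := hc.homog h g₂ g₁ g₀
  bdd := let ⟨C, hC⟩ := hc.bdd; ⟨C, fun g₀ g₁ g₂ => hC g₂ g₁ g₀⟩
  cocycle g₀ g₁ g₂ g₃ := by
    have := hc.cocycle g₃ g₂ g₁ g₀
    simp only [d2, _root_.reverse2] at this ⊢
    linarith

def InvariantFirst (N : Subgroup G) (c : G → G → G → ℝ) : Prop :=
  ∀ z ∈ N, ∀ g₀ g₁ g₂, c (g₀ * z) g₁ g₂ = c g₀ g₁ g₂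

def InvariantLast (N : Subgroup G) (c : G → G → G → ℝ) : Prop :=
  ∀ z ∈ N, ∀ g₀ g₁ g₂, c g₀ g₁ (g₂ * z) = c g₀ g₁ g₂

theorem invariantFirst_reverse {N : Subgroup G} {c : G → G → G → ℝ} :
    InvariantFirst N (reverse2 c) ↔ InvariantLast N c :=
  ⟨fun h z hz g₀ g₁ g₂ => h z hz g₂ g₁ g₀, fun h z hz g₀ g₁ g₂ => h z hz g₂ g₁ g₀⟩

theorem invariantLast_reverse {N : Subgroup G} {c : G → G → G → ℝ} :
    InvariantLast N (reverse2 c) ↔ InvariantFirst N c :=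
  ⟨fun h z hz g₀ g₁ g₂ => h z hz g₂ g₁ g₀, fun h z hz g₀ g₁ g₂ => h z hz g₂ g₁ g₀⟩

theorem IsHomog2.invariant_middle {N : Subgroup G} {c : G → G → G → ℝ} (hc : IsHomog2 c)
    (h₀ : InvariantFirst N c) (h₂ : InvariantLast N c) {z : G} (hz : z ∈ N) (g₀ g₁ g₂ : G) :
    c g₀ (g₁ * z) g₂ = c g₀ g₁ g₂ := by
  have := hc z (g₀ * z⁻¹) g₁ (g₂ * z⁻¹)
  rw [inv_mul_cancel_right, inv_mul_cancel_right] at this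
  rw [this, h₀ _ (inv_mem hz), h₂ _ (inv_mem hz)]

end Cochains

section CentralAveraging

open scoped IsMulCommutative

variable {G : Type*} [Group G]

noncomputable def centralCone (c : G → G → G → ℝ) : G → G → ℝ :=
  fun x y => InvariantMean.mean fun z : center G => c x y (y * z)

theorem isHomog1_centralCone {c : G → G → G → ℝ} (hc : IsHomog2 c) : IsHomog1 (centralCone c) := by
  intro h x y
  refine congrArg InvariantMean.mean (funext fun z => ?_)
  rw [mul_assoc y, mem_center_iff.1 z.2 h, ← mul_assoc, hc]

theorem bdd1_centralCone {c : G → G → G → ℝ} (hc : Bdd2 c) : Bdd1 (centralCone c) :=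
  let ⟨C, hC⟩ := hc
  ⟨C, fun _ _ => InvariantMean.abs_mean_le fun _ => hC _ _ _⟩

theorem sub_d1_centralCone_apply {c : G → G → G → ℝ} (hc : IsBoundedCocycle c) (g₀ g₁ g₂ : G) :
    (c - d1 (centralCone c)) g₀ g₁ g₂
      = InvariantMean.mean (fun z : center G => c g₀ g₁ (g₂ * z)) - centralCone c g₀ g₁ := by
  obtain ⟨C, hC⟩ := hc.bdd
  have hcoc : (fun z : center G => c g₀ g₁ (g₂ * z))
      = fun z : center G => (c g₀ g₁ g₂ + c g₀ g₂ (g₂ * z)) - c g₁ g₂ (g₂ * z) := by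
    funext z
    have := hc.cocycle g₀ g₁ g₂ (g₂ * z)
    simp only [d2] at this
    linarith
  rw [hcoc, InvariantMean.mean_sub (fun _ => (abs_add_le _ _).trans (add_le_add (hC _ _ _)
    (hC _ _ _))) (fun _ => hC _ _ _), InvariantMean.mean_add (fun _ => hC _ _ _)
    (fun _ => hC _ _ _), InvariantMean.mean_const]
  simp only [Pi.sub_apply, d1, centralCone]
  ring

theorem invariantLast_sub_d1_centralCone {c : G → G → G → ℝ} (hc : IsBoundedCocycle c) :
    InvariantLast (center G) (c - d1 (centralCone c)) := by
  obtain ⟨C, hC⟩ := hc.bdd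
  intro z hz g₀ g₁ g₂
  rw [sub_d1_centralCone_apply hc, sub_d1_centralCone_apply hc]
  congr 1
  simpa only [Subgroup.coe_mul, mul_assoc] using
    InvariantMean.mean_comp_mul (f := fun w : center G => c g₀ g₁ (g₂ * w)) (fun _ => hC _ _ _)
      ⟨z, hz⟩

theorem InvariantFirst.sub_d1_centralCone {N : Subgroup G} {c : G → G → G → ℝ}
    (hc : IsBoundedCocycle c) (hN : InvariantFirst N c) :
    InvariantFirst N (c - d1 (centralCone c)) := by
  intro z hz g₀ g₁ g₂
  simp only [sub_d1_centralCone_apply hc, centralCone, hN z hz]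

theorem exists_invariant_sub_d1 {c : G → G → G → ℝ} (hc : IsBoundedCocycle c) :
    ∃ b : G → G → ℝ, IsHomog1 b ∧ Bdd1 b ∧
      InvariantFirst (center G) (c - d1 b) ∧ InvariantLast (center G) (c - d1 b) := by
  set b₁ := centralCone c
  have hc₁ : IsBoundedCocycle (reverse2 (c - d1 b₁)) :=
    (hc.sub_d1 (isHomog1_centralCone hc.homog) (bdd1_centralCone hc.bdd)).reverse2
  set b₂ := centralCone (reverse2 (c - d1 b₁))
  have hrev : c - d1 (b₁ + flip b₂) = reverse2 (reverse2 (c - d1 b₁) - d1 b₂) := by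
    funext g₀ g₁ g₂
    simp only [reverse2, d1, Pi.sub_apply, Pi.add_apply, flip]
    ring
  refine ⟨b₁ + flip b₂, fun h x y => ?_, ?_, ?_, ?_⟩
  · simp only [Pi.add_apply, flip, b₁, b₂, isHomog1_centralCone hc.homog h,
      isHomog1_centralCone hc₁.homog h]
  · obtain ⟨C, hC⟩ := bdd1_centralCone hc.bdd
    obtain ⟨D, hD⟩ := bdd1_centralCone hc₁.bdd
    exact ⟨C + D, fun x y => (abs_add_le _ _).trans (add_le_add (hC x y) (hD y x))⟩
  · rw [hrev, invariantFirst_reverse]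
    exact invariantLast_sub_d1_centralCone hc₁
  · rw [hrev, invariantLast_reverse]
    exact InvariantFirst.sub_d1_centralCone hc₁
      (invariantFirst_reverse.2 (invariantLast_sub_d1_centralCone hc))

end CentralAveraging

section Descent

variable {G Q : Type*} [Group G] [Group Q]

theorem IsHomog1.of_comp {π : G →* Q} (hπ : Function.Surjective π) {b : G → G → ℝ}
    {b' : Q → Q → ℝ} (hb' : ∀ x y, b' (π x) (π y) = b x y) (hb : IsHomog1 b) : IsHomog1 b' := by
  intro h q₀ q₁
  obtain ⟨h, rfl⟩ := hπ h
  obtain ⟨g₀, rfl⟩ := hπ q₀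
  obtain ⟨g₁, rfl⟩ := hπ q₁
  rw [← map_mul, ← map_mul, hb', hb', hb]

theorem IsBoundedCocycle.of_comp {π : G →* Q} (hπ : Function.Surjective π) {c : G → G → G → ℝ}
    {c' : Q → Q → Q → ℝ} (hc' : ∀ g₀ g₁ g₂, c' (π g₀) (π g₁) (π g₂) = c g₀ g₁ g₂)
    (hc : IsBoundedCocycle c) : IsBoundedCocycle c' where
  homog h q₀ q₁ q₂ := by
    obtain ⟨h, rfl⟩ := hπ h
    obtain ⟨g₀, rfl⟩ := hπ q₀
    obtain ⟨g₁, rfl⟩ := hπ q₁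
    obtain ⟨g₂, rfl⟩ := hπ q₂
    rw [← map_mul, ← map_mul, ← map_mul, hc', hc', hc.homog]
  bdd := by
    obtain ⟨C, hC⟩ := hc.bdd
    refine ⟨C, fun q₀ q₁ q₂ => ?_⟩
    obtain ⟨g₀, rfl⟩ := hπ q₀
    obtain ⟨g₁, rfl⟩ := hπ q₁
    obtain ⟨g₂, rfl⟩ := hπ q₂
    rw [hc']
    exact hC g₀ g₁ g₂
  cocycle q₀ q₁ q₂ q₃ := by
    obtain ⟨g₀, rfl⟩ := hπ q₀
    obtain ⟨g₁, rfl⟩ := hπ q₁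
    obtain ⟨g₂, rfl⟩ := hπ q₂
    obtain ⟨g₃, rfl⟩ := hπ q₃
    simpa only [d2, hc'] using hc.cocycle g₀ g₁ g₂ g₃

theorem apply_out_mk {N : Subgroup G} {X : Type*} {f : G → X} (hf : ∀ z ∈ N, ∀ g, f (g * z) = f g)
    (g : G) : f (g : G ⧸ N).out = f g := by
  obtain ⟨z, hz⟩ := QuotientGroup.mk_out_eq_mul N g
  rw [hz, hf z z.2]

end Descent

section CentralExtension

variable {G : Type*} [Group G]

theorem IsHomog1.eq_apply_one {b : G → G → ℝ} (hb : IsHomog1 b) (x y : G) :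
    b x y = b 1 (y * x⁻¹) := by
  rw [← hb x⁻¹ x y, mul_inv_cancel]

theorem IsHomog1.invariant_right_of_invariantLast_d1 {N : Subgroup G} (hN : N ≤ center G)
    {b : G → G → ℝ} (hb : IsHomog1 b) (hbdd : Bdd1 b) (hd : InvariantLast N (d1 b)) {z : G}
    (hz : z ∈ N) (x y : G) : b x (y * z) = b x y := by
  have hmul : ∀ a, ∀ w ∈ N, b 1 (a * w) = b 1 a + b 1 w - b 1 1 := by
    intro a w hw
    -- `d1 b` takes the same value at `(1, a, a * w)` and at `(1, a, a)`
    have := hd w hw 1 a a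
    simp only [d1] at this
    have hconj : a * w * a⁻¹ = w := by rw [mem_center_iff.1 (hN hw) a, mul_inv_cancel_right]
    rw [hb.eq_apply_one a (a * w), hb.eq_apply_one a a, hconj, mul_inv_cancel] at this
    linarith
  obtain ⟨C, hC⟩ := hbdd
  have hzero : b 1 z - b 1 1 = 0 :=
    eq_zero_of_map_mul_of_abs_le (f := fun w : N => b 1 w - b 1 1)
      (fun w w' => by simp only [Subgroup.coe_mul, hmul _ _ w'.2]; ring)
      (fun w => (abs_sub _ _).trans (add_le_add (hC 1 w) (hC 1 1))) ⟨z, hz⟩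
  rw [hb.eq_apply_one, hb.eq_apply_one x y, mul_assoc, ← mem_center_iff.1 (hN hz) x⁻¹,
    ← mul_assoc, hmul _ _ hz]
  linarith

theorem IsHomog1.invariant_left_of_invariant_right {N : Subgroup G} {b : G → G → ℝ}
    (hb : IsHomog1 b) (hright : ∀ z ∈ N, ∀ x y, b x (y * z) = b x y) {z : G} (hz : z ∈ N)
    (x y : G) : b (x * z) y = b x y := by
  rw [← hb z⁻¹, mul_inv_cancel_right, hright _ (inv_mem hz)]

end CentralExtension

section MappingTheorem

variable {G : Type*} [Group G] {Z : Subgroup G} [Z.Normal]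

theorem exists_bdd_homog_d1_eq_of_comp_mk_eq_d1 (hZ : Z ≤ center G) {c' : G ⧸ Z → G ⧸ Z → G ⧸ Z → ℝ}
    {b : G → G → ℝ} (hb : IsHomog1 b) (hbdd : Bdd1 b)
    (hcb : ∀ g₀ g₁ g₂ : G, c' g₀ g₁ g₂ = d1 b g₀ g₁ g₂) :
    ∃ b' : G ⧸ Z → G ⧸ Z → ℝ, IsHomog1 b' ∧ Bdd1 b' ∧ ∀ q₀ q₁ q₂, c' q₀ q₁ q₂ = d1 b' q₀ q₁ q₂ := by
  have hright : ∀ z ∈ Z, ∀ x y, b x (y * z) = b x y := fun z hz =>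
    hb.invariant_right_of_invariantLast_d1 hZ hbdd
      (fun w hw g₀ g₁ g₂ => by rw [← hcb, ← hcb, QuotientGroup.mk_mul_of_mem g₂ hw]) hz
  have hb' : ∀ x y : G, b (x : G ⧸ Z).out (y : G ⧸ Z).out = b x y := fun x y => by
    rw [apply_out_mk (f := fun x' => b x' _)
      (fun z hz g => hb.invariant_left_of_invariant_right hright hz g _),
      apply_out_mk (f := b x) (fun z hz g => hright z hz x g)]
  obtain ⟨C, hC⟩ := hbdd
  refine ⟨fun q₀ q₁ => b q₀.out q₁.out, hb.of_comp (QuotientGroup.mk'_surjective Z) hb',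
    ⟨C, fun _ _ => hC _ _⟩, fun q₀ q₁ q₂ => ?_⟩
  obtain ⟨g₀, rfl⟩ := QuotientGroup.mk_surjective q₀
  obtain ⟨g₁, rfl⟩ := QuotientGroup.mk_surjective q₁
  obtain ⟨g₂, rfl⟩ := QuotientGroup.mk_surjective q₂
  simp only [hcb, d1, hb']

theorem exists_isBoundedCocycle_sub_comp_mk_eq_d1 (hZ : Z ≤ center G) {c : G → G → G → ℝ}
    (hc : IsBoundedCocycle c) :
    ∃ (c' : G ⧸ Z → G ⧸ Z → G ⧸ Z → ℝ) (b : G → G → ℝ), IsBoundedCocycle c' ∧ IsHomog1 b ∧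
      Bdd1 b ∧ ∀ g₀ g₁ g₂ : G, c g₀ g₁ g₂ - c' g₀ g₁ g₂ = d1 b g₀ g₁ g₂ := by
  obtain ⟨b, hb, hbdd, h₀, h₂⟩ := exists_invariant_sub_d1 hc
  set e := c - d1 b
  have he : IsBoundedCocycle e := hc.sub_d1 hb hbdd
  have he' : ∀ g₀ g₁ g₂ : G,
      e (g₀ : G ⧸ Z).out (g₁ : G ⧸ Z).out (g₂ : G ⧸ Z).out = e g₀ g₁ g₂ := fun g₀ g₁ g₂ => by
    rw [apply_out_mk (f := fun x => e x _ _) (fun z hz g => h₀ z (hZ hz) g _ _),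
      apply_out_mk (f := fun x => e g₀ x _)
        (fun z hz g => he.homog.invariant_middle h₀ h₂ (hZ hz) g₀ g _),
      apply_out_mk (f := e g₀ g₁) (fun z hz g => h₂ z (hZ hz) g₀ g₁ g)]
  refine ⟨fun q₀ q₁ q₂ => e q₀.out q₁.out q₂.out, b,
    he.of_comp (QuotientGroup.mk'_surjective Z) he', hb, hbdd, fun g₀ g₁ g₂ => ?_⟩
  simp only [he', e, Pi.sub_apply, sub_sub_cancel]

end MappingTheorem

/-- Degree-2 mapping theorem for a central quotient `p : G → Q = G/Z`, `Z ≤ Z(G)`: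
`p^* : H_b^2(Q) → H_b^2(G)` is an isomorphism, stated at the level of bounded homogeneous
cochains. Injectivity: a bounded 2-cocycle on `Q` whose pullback is a bounded coboundary
on `G` is already a bounded coboundary on `Q`. Surjectivity: every bounded 2-cocycle on
`G` agrees with the pullback of a bounded 2-cocycle on `Q` up to a bounded coboundary. -/
theorem mapping_theorem_degree_two
    {G : Type*} [Group G] (Z : Subgroup G) [Z.Normal] (hZ : Z ≤ Subgroup.center G) :
    (∀ c' : G ⧸ Z → G ⧸ Z → G ⧸ Z → ℝ, IsHomog2 c' → Bdd2 c' →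
        (∀ g₀ g₁ g₂ g₃, d2 c' g₀ g₁ g₂ g₃ = 0) →
        (∃ b : G → G → ℝ, IsHomog1 b ∧ Bdd1 b ∧
          ∀ g₀ g₁ g₂ : G, c' (QuotientGroup.mk g₀) (QuotientGroup.mk g₁) (QuotientGroup.mk g₂)
            = d1 b g₀ g₁ g₂) →
        ∃ b' : G ⧸ Z → G ⧸ Z → ℝ, IsHomog1 b' ∧ Bdd1 b' ∧ ∀ q₀ q₁ q₂, c' q₀ q₁ q₂ = d1 b' q₀ q₁ q₂) ∧
    (∀ c : G → G → G → ℝ, IsHomog2 c → Bdd2 c →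
        (∀ g₀ g₁ g₂ g₃, d2 c g₀ g₁ g₂ g₃ = 0) →
        ∃ (c' : G ⧸ Z → G ⧸ Z → G ⧸ Z → ℝ) (b : G → G → ℝ),
          IsHomog2 c' ∧ Bdd2 c' ∧ (∀ q₀ q₁ q₂ q₃, d2 c' q₀ q₁ q₂ q₃ = 0) ∧
          IsHomog1 b ∧ Bdd1 b ∧
          ∀ g₀ g₁ g₂ : G,
            c g₀ g₁ g₂
              - c' (QuotientGroup.mk g₀) (QuotientGroup.mk g₁) (QuotientGroup.mk g₂)
              = d1 b g₀ g₁ g₂) := by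
  refine ⟨fun c' _ _ _ ⟨b, hb, hbdd, hcb⟩ => exists_bdd_homog_d1_eq_of_comp_mk_eq_d1 hZ hb hbdd hcb,
    fun c hhomog hbdd hcoc => ?_⟩
  obtain ⟨c', b, hc', hb, hbdd', hcb⟩ :=
    exists_isBoundedCocycle_sub_comp_mk_eq_d1 hZ ⟨hhomog, hbdd, hcoc⟩
  exact ⟨c', b, hc'.homog, hc'.bdd, hc'.cocycle, hb, hbdd', hcb⟩
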